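/- arXiv:1910.09389 — 7 statements merged into one kernel-verified Lean document; each statement's English description precedes it below -/
import Mathlib

section
/- For functions $w_1, w_2 \in BS^p(\mathbb{R},X)$, for all $p_0 \in \mathbb{Z}$, $s \in \mathbb{R}$ and $\tau \in \mathbb{R}$ with $|\tau| \le 1$, one has $\|w_1^b(s+p_0+\tau) - w_2^b(s+\tau)\|_{L^p(0,1;X)}^p \le \sum_{j=\lfloor s\rfloor -1}^{\lfloor s\rfloor +2} \|w_1^b(j+p_0) - w_2^b(j)\|_{L^p(0,1;X)}^p$. -/
/-!
Write `u x = w₁ (x + p₀) - w₂ x`. Both sides only involve `‖u‖ ^ p`, which is locally integrable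
because `L^p_loc` is translation invariant and `‖a - b‖ ^ p ≤ 2 ^ p (‖a‖ ^ p + ‖b‖ ^ p)`.
The left side integrates it over `[s + τ, s + τ + 1] ⊆ [⌊s⌋ - 1, ⌊s⌋ + 3]`, so by nonnegativity it
is at most the integral over the larger interval, which splits into the four unit intervals on the
right.
-/

open MeasureTheory Set Filter Topology
open scoped ENNReal

variable {X : Type*} [NormedAddCommGroup X]

/-- The `L^p(0,1;X)`-norm of the Bochner transform `u^b(t)`, raised to the power `p`:
`‖u^b(t)‖_{L^p}^p = ∫_0^1 ‖u(t+θ)‖^p dθ`. -/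
noncomputable def SIntegral (p : ℝ) (u : ℝ → X) (t : ℝ) : ℝ :=
  ∫ θ in Ioo (0:ℝ) 1, ‖u (t + θ)‖ ^ p

/-- The Stepanov norm `‖u‖_{S^p} = sup_t ‖u^b(t)‖_{L^p}`. -/
noncomputable def SNorm (p : ℝ) (u : ℝ → X) : ℝ :=
  ⨆ t : ℝ, (SIntegral p u t) ^ (1 / p)

/-- `u ∈ L^p_loc(ℝ,X)`. -/
def MemLploc (p : ℝ) (u : ℝ → X) : Prop :=
  AEStronglyMeasurable u volume ∧ LocallyIntegrable (fun t => ‖u t‖ ^ p) volume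

/-- `u ∈ BS^p(ℝ,X)`: Stepanov bounded functions. -/
def MemBSp (p : ℝ) (u : ℝ → X) : Prop :=
  MemLploc p u ∧ BddAbove (Set.range (SIntegral p u))

/-- `u ∈ S^p_{aa}(ℝ,X)`: the Bochner transform `u^b` is almost automorphic with values in
`L^p(0,1;X)`; convergence in `L^p(0,1;X)` is expressed via the integrals
`∫_0^1 ‖u(t+s_k+θ) - v(t)(θ)‖^p dθ → 0`. -/
def StepanovAA (p : ℝ) (u : ℝ → X) : Prop :=
  MemLploc p u ∧
  ∀ s : ℕ → ℝ, ∃ φ : ℕ → ℕ, StrictMono φ ∧ ∃ v : ℝ → ℝ → X,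
    (∀ t : ℝ, Tendsto (fun k => ∫ θ in Ioo (0:ℝ) 1, ‖u (t + s (φ k) + θ) - v t θ‖ ^ p)
      atTop (𝓝 0)) ∧
    (∀ t : ℝ, Tendsto (fun k => ∫ θ in Ioo (0:ℝ) 1, ‖v (t - s (φ k)) θ - u (t + θ)‖ ^ p)
      atTop (𝓝 0))

/-- `u ∈ S^p_{ap}(ℝ,X)`: the Bochner transform `u^b` is Bohr almost periodic with values in
`L^p(0,1;X)`. -/
def StepanovAP (p : ℝ) (u : ℝ → X) : Prop :=
  MemLploc p u ∧
  ∀ ε > (0:ℝ), ∃ ℓ > (0:ℝ), ∀ α : ℝ, ∃ τ ∈ Icc α (α + ℓ),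
    ∀ t : ℝ, (∫ θ in Ioo (0:ℝ) 1, ‖u (t + τ + θ) - u (t + θ)‖ ^ p) ≤ ε ^ p

/-- A family `H ⊂ L^p_loc(ℝ,X)` is Stepanov tight. -/
def StepanovTight (H : Set (ℝ → X)) : Prop :=
  ∀ ε > (0:ℝ), ∃ K : Set X, IsCompact K ∧ ∀ u ∈ H, ∀ t : ℝ,
    volume {s ∈ Ioo t (t + 1) | u s ∉ K} < ENNReal.ofReal ε

/-- A family `H ⊂ L^p_loc(ℝ,X)` is Stepanov `p`-uniformly integrable. -/
def StepanovUI (p : ℝ) (H : Set (ℝ → X)) : Prop :=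
  ∀ ε > (0:ℝ), ∃ δ > (0:ℝ), ∀ u ∈ H, ∀ t : ℝ, ∀ E : Set ℝ, MeasurableSet E →
    E ⊆ Ioo t (t + 1) → volume E ≤ ENNReal.ofReal δ →
    (∫ s in E, ‖u s‖ ^ p) ≤ ε

/-- Bohr almost periodic functions `AP(ℝ,E)`. -/
def IsAlmostPeriodic {E : Type*} [NormedAddCommGroup E] (v : ℝ → E) : Prop :=
  Continuous v ∧ ∀ ε > (0:ℝ), ∃ ℓ > (0:ℝ), ∀ α : ℝ, ∃ τ ∈ Icc α (α + ℓ),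
    ∀ t : ℝ, ‖v (t + τ) - v t‖ ≤ ε

/-- Almost automorphic functions `AA(ℝ,E)`. -/
def IsAlmostAutomorphic {E : Type*} [NormedAddCommGroup E] (v : ℝ → E) : Prop :=
  Continuous v ∧ ∀ s : ℕ → ℝ, ∃ φ : ℕ → ℕ, StrictMono φ ∧ ∃ w : ℝ → E,
    (∀ t : ℝ, Tendsto (fun k => v (t + s (φ k))) atTop (𝓝 (w t))) ∧
    (∀ t : ℝ, Tendsto (fun k => w (t - s (φ k))) atTop (𝓝 (v t)))

lemma norm_sub_rpow_le (a b : X) {p : ℝ} (hp : 0 ≤ p) :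
    ‖a - b‖ ^ p ≤ 2 ^ p * (‖a‖ ^ p + ‖b‖ ^ p) :=
  calc ‖a - b‖ ^ p ≤ (2 * max ‖a‖ ‖b‖) ^ p := by
        gcongr
        calc ‖a - b‖ ≤ ‖a‖ + ‖b‖ := norm_sub_le a b
          _ ≤ 2 * max ‖a‖ ‖b‖ := by linarith [le_max_left ‖a‖ ‖b‖, le_max_right ‖a‖ ‖b‖]
    _ = 2 ^ p * max (‖a‖ ^ p) (‖b‖ ^ p) := by
        rw [Real.mul_rpow zero_le_two (by positivity),
          Real.rpow_max (norm_nonneg a) (norm_nonneg b) hp]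
    _ ≤ 2 ^ p * (‖a‖ ^ p + ‖b‖ ^ p) := by
        gcongr
        exact max_le_add_of_nonneg (by positivity) (by positivity)

lemma MemLploc.comp_add_right {p : ℝ} {u : ℝ → X} (hu : MemLploc p u) (c : ℝ) :
    MemLploc p (fun x => u (x + c)) := by
  refine ⟨hu.1.comp_quasiMeasurePreserving
    (measurePreserving_add_right volume c).quasiMeasurePreserving, ?_⟩
  have := (locallyIntegrable_map_homeomorph (Homeomorph.addRight c) (μ := volume)
    (f := fun x => ‖u x‖ ^ p)).mp
  rw [Homeomorph.coe_addRight, map_add_right_eq_self] at this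
  exact this hu.2

lemma MemLploc.sub {p : ℝ} (hp : 0 ≤ p) {u v : ℝ → X} (hu : MemLploc p u) (hv : MemLploc p v) :
    MemLploc p (u - v) := by
  refine ⟨hu.1.sub hv.1, ((hu.2.add hv.2).smul (2 ^ p : ℝ)).mono
    ((Real.continuous_rpow_const hp).comp_aestronglyMeasurable (hu.1.sub hv.1).norm)
    (.of_forall fun x => ?_)⟩
  simp only [Pi.sub_apply, Pi.smul_apply, Pi.add_apply, smul_eq_mul, Real.norm_eq_abs]
  rw [abs_of_nonneg (by positivity), abs_of_nonneg (by positivity)]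
  exact norm_sub_rpow_le (u x) (v x) hp

section

variable {E : Type*} [NormedAddCommGroup E] [NormedSpace ℝ E]

lemma setIntegral_Ioo_zero_one_comp_add_left (f : ℝ → E) (t : ℝ) :
    ∫ θ in Ioo (0:ℝ) 1, f (t + θ) = ∫ x in t..t + 1, f x := by
  rw [← integral_Ioc_eq_integral_Ioo, ← intervalIntegral.integral_of_le zero_le_one,
    intervalIntegral.integral_comp_add_left f t, add_zero]

lemma sum_intervalIntegral_Ico_int {f : ℝ → E} {m n : ℤ} (hmn : m ≤ n)
    (hf : IntervalIntegrable f volume m n) :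
    ∑ j ∈ Finset.Ico m n, ∫ x in (j:ℝ)..j + 1, f x = ∫ x in (m:ℝ)..n, f x := by
  induction n, hmn using Int.leInduction with
  | base => simp
  | succ n hmn ih =>
    have hm : (m : ℝ) ≤ n := by exact_mod_cast hmn
    push_cast at hf ⊢
    have hn_mem : (n : ℝ) ∈ uIcc (m : ℝ) (n + 1) := mem_uIcc_of_le hm (by linarith)
    have hmn' : IntervalIntegrable f volume m n :=
      hf.mono_set (uIcc_subset_uIcc left_mem_uIcc hn_mem)
    have hn : IntervalIntegrable f volume n (n + 1) :=
      hf.mono_set (uIcc_subset_uIcc hn_mem right_mem_uIcc)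
    rw [← Finset.insert_Ico_right_eq_Ico_add_one hmn, Finset.sum_insert (by simp), ih hmn',
      add_comm, intervalIntegral.integral_add_adjacent_intervals hmn' hn]

end

lemma SIntegral_eq_intervalIntegral (p : ℝ) (u : ℝ → X) (t : ℝ) :
    SIntegral p u t = ∫ x in t..t + 1, ‖u x‖ ^ p :=
  setIntegral_Ioo_zero_one_comp_add_left (fun x => ‖u x‖ ^ p) t

lemma SIntegral_le_sum_Ico {p : ℝ} {u : ℝ → X} (hu : LocallyIntegrable (fun x => ‖u x‖ ^ p))
    {m n : ℤ} {t : ℝ} (hmt : m ≤ t) (htn : t + 1 ≤ n) :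
    SIntegral p u t ≤ ∑ j ∈ Finset.Ico m n, SIntegral p u j := by
  have hmn : m ≤ n := by exact_mod_cast (by linarith : (m : ℝ) ≤ n)
  have hint : IntervalIntegrable (fun x => ‖u x‖ ^ p) volume m n :=
    (hu.integrableOn_isCompact isCompact_uIcc).intervalIntegrable
  simp only [SIntegral_eq_intervalIntegral]
  rw [sum_intervalIntegral_Ico_int hmn hint]
  exact intervalIntegral.integral_mono_interval hmt (by linarith) htn
    (.of_forall fun x => by positivity) hint

/-- Lemma: for `w₁, w₂ ∈ BS^p(ℝ,X)`, all `p₀ ∈ ℤ`, `s, τ ∈ ℝ` with `|τ| ≤ 1`,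
`‖w₁^b(s+p₀+τ) - w₂^b(s+τ)‖_{L^p}^p ≤ ∑_{j=⌊s⌋-1}^{⌊s⌋+2} ‖w₁^b(j+p₀) - w₂^b(j)‖_{L^p}^p`. -/
theorem stmt_0 (p : ℝ) (hp : 1 ≤ p) (w₁ w₂ : ℝ → X)
    (h₁ : MemBSp p w₁) (h₂ : MemBSp p w₂)
    (p₀ : ℤ) (s τ : ℝ) (hτ : |τ| ≤ 1) :
    (∫ θ in Ioo (0:ℝ) 1, ‖w₁ (s + (p₀ : ℝ) + τ + θ) - w₂ (s + τ + θ)‖ ^ p) ≤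
      ∑ j ∈ Finset.Icc (⌊s⌋ - 1) (⌊s⌋ + 2),
        ∫ θ in Ioo (0:ℝ) 1, ‖w₁ ((j : ℝ) + (p₀ : ℝ) + θ) - w₂ ((j : ℝ) + θ)‖ ^ p := by
  set u : ℝ → X := (fun x => w₁ (x + p₀)) - w₂
  have hu : MemLploc p u := (h₁.1.comp_add_right p₀).sub (by linarith) h₂.1
  have hSIntegral (t : ℝ) :
      ∫ θ in Ioo (0:ℝ) 1, ‖w₁ (t + p₀ + θ) - w₂ (t + θ)‖ ^ p = SIntegral p u t := by
    simp only [SIntegral, u, Pi.sub_apply, add_right_comm]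
  simp_rw [show s + (p₀ : ℝ) + τ = s + τ + p₀ by ring, hSIntegral,
    ← Finset.Ico_add_one_right_eq_Icc]
  obtain ⟨hτ_ge, hτ_le⟩ := abs_le.mp hτ
  apply SIntegral_le_sum_Ico hu.2 <;> push_cast <;>
    linarith [Int.floor_le s, Int.lt_floor_add_one s]
end

section
/- The map $L: BC(\mathbb{R}, L^p(0,1;X)) \to BS^p(\mathbb{R},X)$ defined by $LU(t) = U(\lfloor t\rfloor)(\{t\})$ is a bounded linear left inverse of the Bochner transform $B: BS^p(\mathbb{R},X) \to BC(\mathbb{R},L^p(0,1;X))$, i.e., $L \circ B = \mathrm{Id}$ on $BS^p(\mathbb{R},X)$. -/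
open MeasureTheory Set Filter Topology
open scoped ENNReal

variable {X : Type*} [NormedAddCommGroup X]

/-! On the cell `[n, n + 1)` the function `LU` is the translate `t ↦ U n (t - n)`, so its
measurability and local `p`-integrability are checked cell by cell. A window `(t, t + 1)` meets
only the cells of `⌊t⌋` and `⌊t⌋ + 1`, hence `∫_t^{t+1} ‖LU‖^p ≤ 2 sup_s ‖U s‖_{L^p}^p`, which
gives the factor `2 ^ (1 / p)`. -/

lemma measurePreserving_sub_const_restrict_Ico (a : ℝ) :
    MeasurePreserving (fun t => t - a) (volume.restrict (Ico a (a + 1)))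
      (volume.restrict (Ioo 0 1)) := by
  have h := (measurePreserving_sub_right volume a).restrict_preimage
    (measurableSet_Ioo (a := (0 : ℝ)) (b := 1))
  rwa [preimage_sub_const_Ioo, zero_add, add_comm 1, Measure.restrict_congr_set Ioo_ae_eq_Ico]
    at h

lemma locallyIntegrable_of_integrableOn_Ico_intCast {E : Type*} [NormedAddCommGroup E]
    {f : ℝ → E} (hf : ∀ n : ℤ, IntegrableOn f (Ico n (n + 1))) : LocallyIntegrable f := by
  rw [locallyIntegrable_iff]
  intro K hK
  obtain ⟨r, hr⟩ := hK.isBounded.subset_closedBall 0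
  rw [Real.closedBall_eq_Icc, zero_sub, zero_add] at hr
  have hcover : Icc (-r) r ⊆ ⋃ n ∈ Finset.Icc ⌊-r⌋ ⌊r⌋, Ico (n : ℝ) (n + 1) := fun t ht =>
    mem_biUnion (Finset.mem_Icc.mpr ⟨Int.floor_le_floor ht.1, Int.floor_le_floor ht.2⟩)
      ⟨Int.floor_le t, Int.lt_floor_add_one t⟩
  exact ((integrableOn_finset_iUnion.mpr fun n _ => hf n).mono_set hcover).mono_set hr

lemma setIntegral_Ioo_le_add_setIntegral_Ico_floor {g : ℝ → ℝ} (hg0 : 0 ≤ g)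
    (hg : ∀ n : ℤ, IntegrableOn g (Ico n (n + 1))) (t : ℝ) :
    ∫ s in Ioo t (t + 1), g s ≤
      (∫ s in Ico (⌊t⌋ : ℝ) (⌊t⌋ + 1), g s) +
        ∫ s in Ico ((⌊t⌋ + 1 : ℤ) : ℝ) ((⌊t⌋ + 1 : ℤ) + 1), g s := by
  have hcover : Ioo t (t + 1) ⊆
      Ico (⌊t⌋ : ℝ) (⌊t⌋ + 1) ∪ Ico ((⌊t⌋ + 1 : ℤ) : ℝ) ((⌊t⌋ + 1 : ℤ) + 1) := by
    intro s hs
    have := Int.floor_le t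
    have := Int.lt_floor_add_one t
    rcases lt_or_ge s (⌊t⌋ + 1) with h | h
    · exact Or.inl ⟨by linarith [hs.1], h⟩
    · exact Or.inr ⟨by push_cast; exact h, by push_cast; linarith [hs.2]⟩
  rw [← setIntegral_union (Ico_disjoint_Ico_same.mono_right (by push_cast; rfl))
    measurableSet_Ico (hg _) (hg _)]
  exact setIntegral_mono_set ((hg _).union (hg _)) (Eventually.of_forall hg0)
    hcover.eventuallyLE

lemma SIntegral_eq_setIntegral (p : ℝ) (u : ℝ → X) (t : ℝ) :
    SIntegral p u t = ∫ s in Ioo t (t + 1), ‖u s‖ ^ p := by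
  have h := (measurePreserving_sub_const_restrict_Ico t).integral_comp
    (measurableEmbedding_subRight t) (fun θ => ‖u (t + θ)‖ ^ p)
  simp only [add_sub_cancel] at h
  rw [SIntegral, ← h, Measure.restrict_congr_set Ioo_ae_eq_Ico]

section BochnerLeftInv

variable {E : Type*}

noncomputable def bochnerLeftInv (U : ℝ → ℝ → E) (t : ℝ) : E := U ⌊t⌋ (Int.fract t)

lemma bochnerLeftInv_bochner (u : ℝ → E) (t : ℝ) :
    bochnerLeftInv (fun s θ => u (s + θ)) t = u t :=
  congrArg u (Int.floor_add_fract t)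

lemma eqOn_bochnerLeftInv_Ico (U : ℝ → ℝ → E) (n : ℤ) :
    EqOn (bochnerLeftInv U) (fun t => U n (t - n)) (Ico n (n + 1)) := fun t ht => by
  rw [bochnerLeftInv, ← Int.self_sub_floor, Int.floor_eq_on_Ico n t ht]

variable [NormedAddCommGroup E] {U : ℝ → ℝ → E}

lemma aestronglyMeasurable_bochnerLeftInv
    (hU : ∀ n : ℤ, AEStronglyMeasurable (U n) (volume.restrict (Ioo 0 1))) :
    AEStronglyMeasurable (bochnerLeftInv U) := by
  rw [← Measure.restrict_univ (μ := volume), ← iUnion_Ico_intCast, aestronglyMeasurable_iUnion_iff]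
  exact fun n => ((hU n).comp_measurePreserving (measurePreserving_sub_const_restrict_Ico n)).congr
    ((eqOn_bochnerLeftInv_Ico U n).aeEq_restrict measurableSet_Ico).symm

lemma integrableOn_bochnerLeftInv_Ico (n : ℤ) (hU : IntegrableOn (U n) (Ioo 0 1)) :
    IntegrableOn (bochnerLeftInv U) (Ico n (n + 1)) :=
  ((measurePreserving_sub_const_restrict_Ico n).integrable_comp_of_integrable hU).congr
    ((eqOn_bochnerLeftInv_Ico U n).aeEq_restrict measurableSet_Ico).symm

lemma setIntegral_bochnerLeftInv_Ico [NormedSpace ℝ E] (n : ℤ) :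
    ∫ t in Ico (n : ℝ) (n + 1), bochnerLeftInv U t = ∫ θ in Ioo 0 1, U n θ := by
  rw [setIntegral_congr_fun measurableSet_Ico (eqOn_bochnerLeftInv_Ico U n)]
  exact (measurePreserving_sub_const_restrict_Ico n).integral_comp
    (measurableEmbedding_subRight (n : ℝ)) (U n)

end BochnerLeftInv

section StepanovBound

variable {p : ℝ} {U : ℝ → ℝ → X}

lemma norm_rpow_bochnerLeftInv :
    (fun t => ‖bochnerLeftInv U t‖ ^ p) = bochnerLeftInv (fun s θ => ‖U s θ‖ ^ p) := rfl

lemma SIntegral_bochnerLeftInv_le (hU : ∀ s, IntegrableOn (fun θ => ‖U s θ‖ ^ p) (Ioo 0 1))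
    (t : ℝ) :
    SIntegral p (bochnerLeftInv U) t ≤
      (∫ θ in Ioo 0 1, ‖U ⌊t⌋ θ‖ ^ p) + ∫ θ in Ioo 0 1, ‖U ((⌊t⌋ + 1 : ℤ) : ℝ) θ‖ ^ p := by
  have h := setIntegral_Ioo_le_add_setIntegral_Ico_floor
    (g := bochnerLeftInv fun s θ => ‖U s θ‖ ^ p) (fun s => Real.rpow_nonneg (norm_nonneg _) p)
    (fun n => integrableOn_bochnerLeftInv_Ico n (hU n)) t
  rwa [setIntegral_bochnerLeftInv_Ico, setIntegral_bochnerLeftInv_Ico, ← norm_rpow_bochnerLeftInv,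
    ← SIntegral_eq_setIntegral] at h

lemma memBSp_bochnerLeftInv {C : ℝ}
    (hmeas : ∀ s, AEStronglyMeasurable (U s) (volume.restrict (Ioo 0 1)))
    (hU : ∀ s, IntegrableOn (fun θ => ‖U s θ‖ ^ p) (Ioo 0 1))
    (hC : ∀ s, (∫ θ in Ioo 0 1, ‖U s θ‖ ^ p) ≤ C) :
    MemBSp p (bochnerLeftInv U) := by
  refine ⟨⟨aestronglyMeasurable_bochnerLeftInv fun n => hmeas n, ?_⟩, ⟨C + C, ?_⟩⟩
  · rw [norm_rpow_bochnerLeftInv]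
    exact locallyIntegrable_of_integrableOn_Ico_intCast
      fun n => integrableOn_bochnerLeftInv_Ico n (hU n)
  · rintro _ ⟨t, rfl⟩
    exact (SIntegral_bochnerLeftInv_le hU t).trans (add_le_add (hC _) (hC _))

lemma SNorm_bochnerLeftInv_le (hp : 0 < p) {C : ℝ}
    (hU : ∀ s, IntegrableOn (fun θ => ‖U s θ‖ ^ p) (Ioo 0 1))
    (hC : ∀ s, (∫ θ in Ioo 0 1, ‖U s θ‖ ^ p) ≤ C) :
    SNorm p (bochnerLeftInv U) ≤
      (2 : ℝ) ^ (1 / p) * ⨆ s : ℝ, (∫ θ in Ioo 0 1, ‖U s θ‖ ^ p) ^ (1 / p) := by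
  set I : ℝ → ℝ := fun s => ∫ θ in Ioo 0 1, ‖U s θ‖ ^ p
  set S := ⨆ s, I s ^ (1 / p)
  have hI0 (s : ℝ) : 0 ≤ I s := integral_nonneg fun θ => Real.rpow_nonneg (norm_nonneg _) p
  have hbdd : BddAbove (range fun s => I s ^ (1 / p)) :=
    ⟨C ^ (1 / p), by
      rintro _ ⟨s, rfl⟩
      exact Real.rpow_le_rpow (hI0 s) (hC s) (by positivity)⟩
  have hS0 : 0 ≤ S := (Real.rpow_nonneg (hI0 0) _).trans (le_ciSup hbdd 0)
  have hI_le (s : ℝ) : I s ≤ S ^ p := by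
    rw [← Real.rpow_inv_le_iff_of_pos (hI0 s) hS0 hp, ← one_div]
    exact le_ciSup hbdd s
  refine ciSup_le fun t => ?_
  have hSI0 : 0 ≤ SIntegral p (bochnerLeftInv U) t :=
    integral_nonneg fun θ => Real.rpow_nonneg (norm_nonneg _) p
  rw [one_div, Real.rpow_inv_le_iff_of_pos hSI0 (by positivity) hp,
    Real.mul_rpow (by positivity) hS0, Real.rpow_inv_rpow zero_le_two hp.ne']
  linarith [SIntegral_bochnerLeftInv_le hU t, hI_le ⌊t⌋, hI_le ((⌊t⌋ + 1 : ℤ) : ℝ)]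

end StepanovBound

/-- The map `L : BC(ℝ, L^p(0,1;X)) → BS^p(ℝ,X)`, `LU(t) = U(⌊t⌋)({t})`, is a bounded
(linear) left inverse of the Bochner transform `B`. Elements of `BC(ℝ,L^p(0,1;X))` are
represented by functions `U : ℝ → (0,1) → X` which are a.e. strongly measurable in `θ`,
`p`-integrable uniformly in `t`, and continuous in `t` for the `L^p(0,1;X)` distance.
The identity `L ∘ B = Id` holds since `(Bu)(⌊t⌋)({t}) = u(⌊t⌋ + {t}) = u(t)`. -/
theorem stmt_6 (p : ℝ) (hp : 1 ≤ p) :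
    -- L ∘ B = Id on BS^p(ℝ,X)
    (∀ u : ℝ → X, ∀ t : ℝ, (fun θ => u ((⌊t⌋ : ℝ) + θ)) (Int.fract t) = u t) ∧
    -- L is well-defined and bounded: it maps BC(ℝ,L^p(0,1;X)) into BS^p(ℝ,X)
    (∀ U : ℝ → ℝ → X, ∀ C : ℝ,
      (∀ t, AEStronglyMeasurable (U t) (volume.restrict (Ioo (0:ℝ) 1))) →
      (∀ t, IntegrableOn (fun θ => ‖U t θ‖ ^ p) (Ioo (0:ℝ) 1)) →
      (∀ t₀ : ℝ, Tendsto (fun t => ∫ θ in Ioo (0:ℝ) 1, ‖U t θ - U t₀ θ‖ ^ p)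
        (𝓝 t₀) (𝓝 0)) →
      (∀ t, (∫ θ in Ioo (0:ℝ) 1, ‖U t θ‖ ^ p) ≤ C) →
      MemBSp p (fun t => U ⌊t⌋ (Int.fract t)) ∧
        SNorm p (fun t => U ⌊t⌋ (Int.fract t)) ≤
          (2:ℝ) ^ (1 / p) * ⨆ t : ℝ, (∫ θ in Ioo (0:ℝ) 1, ‖U t θ‖ ^ p) ^ (1 / p)) :=
  ⟨fun u t => bochnerLeftInv_bochner u t, fun _ _ hmeas hU _ hC =>
    ⟨memBSp_bochnerLeftInv hmeas hU hC, SNorm_bochnerLeftInv_le (by linarith) hU hC⟩⟩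
end

section
/- The range $\mathrm{Im}(B)$ of the Bochner transform $B: BS^p(\mathbb{R},X) \to BC(\mathbb{R},L^p(0,1;X))$ is a closed subspace which admits the topological complement $M = \{V \in BC(\mathbb{R},L^p(0,1;X)) : V(n)=0 \text{ for all } n\in\mathbb{Z}\}$, i.e., $BC(\mathbb{R},L^p(0,1;X)) = \mathrm{Im}(B) \oplus M$. -/
open MeasureTheory Set Filter Topology
open scoped ENNReal

variable {X : Type*} [NormedAddCommGroup X]

/-!
Let `glue V` be the function equal to `V n (s - n)` for `s ∈ [n, n + 1)`, and `P V := B (glue V)`.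
A function is determined a.e. by its windows `u (n + ·)` at the integers, so `V ∈ Im B` iff
`P V = V`, while `P V` always agrees with `V` at the integers; hence `P` is a projection with
range `Im B` and kernel `M`, and `V = P V + (V - P V)`. A window `(t, t + 1)` meets only two of
the intervals `(n, n + 1)`, so `‖P V t‖ ≤ ‖V ⌊t⌋‖ + ‖V (⌊t⌋ + 1)‖`: `P` is Lipschitz, which makes
`Im B = {V | P V = V}` closed. That `P V` is continuous in `t` is the continuity of translation
in `L^q(ℝ)`.
-/

theorem MeasureTheory.MemLp.restrict_union {α E : Type*} [MeasurableSpace α] [NormedAddCommGroup E]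
    {μ : Measure α} {p : ℝ≥0∞} {f : α → E} {s t : Set α} (hs : MeasurableSet s)
    (ht : MeasurableSet t) (hfs : MemLp f p (μ.restrict s)) (hft : MemLp f p (μ.restrict t)) :
    MemLp f p (μ.restrict (s ∪ t)) := by
  rw [← memLp_indicator_iff_restrict (hs.union ht), ← union_sdiff_self,
    indicator_union_of_disjoint disjoint_sdiff_right]
  exact ((memLp_indicator_iff_restrict hs).2 hfs).add
    ((memLp_indicator_iff_restrict (ht.diff hs)).2 (hft.mono_measure
      (Measure.restrict_mono sdiff_subset le_rfl)))

theorem MeasureTheory.eLpNorm_restrict_union_le {α E : Type*} [MeasurableSpace α]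
    [NormedAddCommGroup E] {μ : Measure α} {p : ℝ≥0∞} (hp : 1 ≤ p) {f : α → E} {s t : Set α}
    (hs : MeasurableSet s) (ht : MeasurableSet t)
    (hf : AEStronglyMeasurable f (μ.restrict (s ∪ t))) :
    eLpNorm f p (μ.restrict (s ∪ t)) ≤ eLpNorm f p (μ.restrict s) + eLpNorm f p (μ.restrict t) := by
  have hsub : ∀ {u}, u ⊆ s ∪ t → AEStronglyMeasurable f (μ.restrict u) :=
    fun hu => hf.mono_measure (Measure.restrict_mono hu le_rfl)
  rw [← eLpNorm_indicator_eq_eLpNorm_restrict (hs.union ht), ← union_sdiff_self,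
    indicator_union_of_disjoint disjoint_sdiff_right]
  calc eLpNorm (s.indicator f + (t \ s).indicator f) p μ
      ≤ eLpNorm (s.indicator f) p μ + eLpNorm ((t \ s).indicator f) p μ :=
        eLpNorm_add_le ((aestronglyMeasurable_indicator_iff hs).2 (hsub subset_union_left))
          ((aestronglyMeasurable_indicator_iff (ht.diff hs)).2
            (hsub (sdiff_subset.trans subset_union_right))) hp
    _ ≤ eLpNorm f p (μ.restrict s) + eLpNorm f p (μ.restrict t) := by
        rw [eLpNorm_indicator_eq_eLpNorm_restrict hs,
          eLpNorm_indicator_eq_eLpNorm_restrict (ht.diff hs)]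
        gcongr
        exact sdiff_subset

namespace BochnerTransform

open scoped BoundedContinuousFunction

local notation "μ₀" => Measure.restrict (volume : Measure ℝ) (Ioo (0:ℝ) 1)

section Window

variable {q : ℝ≥0∞} {f : ℝ → X}

theorem measurePreserving_add_left_restrict (t : ℝ) :
    MeasurePreserving (t + ·) μ₀ (volume.restrict (Ioo t (t + 1))) := by
  have h := (measurePreserving_add_left volume t).restrict_preimage
    (measurableSet_Ioo (a := t) (b := t + 1))
  rwa [preimage_const_add_Ioo, sub_self, add_sub_cancel_left] at h

theorem map_add_left_restrict (t : ℝ) :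
    Measure.map (t + ·) μ₀ = volume.restrict (Ioo t (t + 1)) :=
  (measurePreserving_add_left_restrict t).map_eq

theorem memLp_comp_add_left_iff {t : ℝ} :
    MemLp (fun θ => f (t + θ)) q μ₀ ↔ MemLp f q (volume.restrict (Ioo t (t + 1))) := by
  rw [← map_add_left_restrict, (measurableEmbedding_addLeft t).memLp_map_measure_iff]
  rfl

theorem eLpNorm_comp_add_left (t : ℝ) :
    eLpNorm (fun θ => f (t + θ)) q μ₀ = eLpNorm f q (volume.restrict (Ioo t (t + 1))) := by
  rw [← map_add_left_restrict, (measurableEmbedding_addLeft t).eLpNorm_map_measure]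
  rfl

theorem comp_add_left_ae_eq {β : Type*} {u v : ℝ → β} (h : u =ᵐ[volume] v) (t : ℝ) :
    (fun θ => u (t + θ)) =ᵐ[μ₀] fun θ => v (t + θ) :=
  (measurePreserving_add_left_restrict t).quasiMeasurePreserving.ae_eq_comp (ae_restrict_of_ae h)

theorem ae_eq_of_comp_add_intCast {β : Type*} {u v : ℝ → β}
    (h : ∀ n : ℤ, (fun θ => u (n + θ)) =ᵐ[μ₀] fun θ => v (n + θ)) : u =ᵐ[volume] v := by
  have hIco : ∀ n : ℤ, u =ᵐ[volume.restrict (Ico (n : ℝ) (n + 1))] v := fun n => by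
    rw [Measure.restrict_congr_set Ioo_ae_eq_Ico.symm, EventuallyEq, ← map_add_left_restrict,
      (measurableEmbedding_addLeft _).ae_map_iff]
    exact h n
  rw [← Measure.restrict_univ (μ := volume), ← iUnion_Ico_intCast]
  exact (ae_restrict_iUnion_iff _ _).2 hIco

theorem restrict_Ioo_le_floor (t : ℝ) :
    volume.restrict (Ioo t (t + 1)) ≤
      volume.restrict (Icc (⌊t⌋ : ℝ) (⌊t⌋ + 1) ∪ Icc ((⌊t⌋ : ℝ) + 1) (⌊t⌋ + 1 + 1)) := by
  refine Measure.restrict_mono (fun s hs => ?_) le_rfl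
  have := Int.floor_le t
  have := Int.lt_floor_add_one t
  rcases le_total s (⌊t⌋ + 1) with h | h
  · exact Or.inl ⟨by linarith [hs.1], h⟩
  · exact Or.inr ⟨h, by linarith [hs.2]⟩

theorem memLp_restrict_Ioo_of_intCast
    (hf : ∀ n : ℤ, MemLp f q (volume.restrict (Ioo (n : ℝ) (n + 1)))) (t : ℝ) :
    MemLp f q (volume.restrict (Ioo t (t + 1))) := by
  have h₁ := hf ⌊t⌋
  have h₂ := hf (⌊t⌋ + 1)
  rw [Measure.restrict_congr_set Ioo_ae_eq_Icc] at h₁ h₂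
  push_cast at h₂
  exact (h₁.restrict_union measurableSet_Icc measurableSet_Icc h₂).mono_measure
    (restrict_Ioo_le_floor t)

theorem eLpNorm_restrict_Ioo_le_of_intCast
    (hf : ∀ n : ℤ, MemLp f q (volume.restrict (Ioo (n : ℝ) (n + 1)))) (hq : 1 ≤ q) (t : ℝ) :
    eLpNorm f q (volume.restrict (Ioo t (t + 1))) ≤
      eLpNorm f q (volume.restrict (Ioo (⌊t⌋ : ℝ) (⌊t⌋ + 1))) +
        eLpNorm f q (volume.restrict (Ioo ((⌊t⌋ : ℝ) + 1) (⌊t⌋ + 1 + 1))) := by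
  have h₁ := hf ⌊t⌋
  have h₂ := hf (⌊t⌋ + 1)
  rw [Measure.restrict_congr_set Ioo_ae_eq_Icc] at h₁ h₂
  push_cast at h₂
  rw [Measure.restrict_congr_set (Ioo_ae_eq_Icc (a := (⌊t⌋ : ℝ))),
    Measure.restrict_congr_set (Ioo_ae_eq_Icc (a := (⌊t⌋ : ℝ) + 1))]
  exact (eLpNorm_mono_measure f (restrict_Ioo_le_floor t)).trans
    (eLpNorm_restrict_union_le hq measurableSet_Icc measurableSet_Icc
      (h₁.restrict_union measurableSet_Icc measurableSet_Icc h₂).aestronglyMeasurable)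

end Window

section Continuity

variable {q : ℝ≥0∞} [Fact (1 ≤ q)] {f : ℝ → X}

theorem continuous_comp_add_left_toLp_of_memLp (hq : q ≠ ∞) (hf : MemLp f q volume) :
    Continuous fun t => (memLp_comp_add_left_iff.2 (hf.restrict (Ioo t (t + 1)))).toLp
      fun θ => f (t + θ) := by
  let shift : ℝ → C(ℝ, ℝ) := fun t => ⟨(t + ·), continuous_const_add t⟩
  have hshift : Continuous shift :=
    ContinuousMap.continuous_of_continuous_uncurry _ continuous_add
  let restr : Lp X q volume → Lp X q μ₀ := fun F => ((Lp.memLp F).restrict _).toLp F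
  have hrestr : LipschitzWith 1 restr := LipschitzWith.of_edist_le fun F F' => by
    rw [Lp.edist_toLp_toLp, Lp.edist_def]
    exact eLpNorm_mono_measure _ Measure.restrict_le_self
  convert hrestr.continuous.comp (continuous_const.compMeasurePreservingLp hshift
    (fun t => measurePreserving_add_left volume t) hq (f := fun _ => hf.toLp f)) using 1
  funext t
  exact MemLp.toLp_congr _ ((Lp.memLp _).restrict _)
    ((comp_add_left_ae_eq hf.coeFn_toLp t).symm.trans
    (ae_restrict_of_ae (Lp.coeFn_compMeasurePreserving _ _).symm))

theorem continuous_comp_add_left_toLp (hq : q ≠ ∞)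
    (hf : ∀ t, MemLp f q (volume.restrict (Ioo t (t + 1)))) :
    Continuous fun t => (memLp_comp_add_left_iff.2 (hf t)).toLp fun θ => f (t + θ) := by
  refine continuous_iff_continuousAt.2 fun t₀ => ?_
  set S := Ioo (t₀ - 1 / 2) (t₀ + 3 / 2)
  have hS : S ⊆ Ioo (t₀ - 1 / 2) (t₀ - 1 / 2 + 1) ∪ Icc (t₀ - 1 / 2 + 1) (t₀ - 1 / 2 + 1 + 1) :=
    fun s hs => (lt_or_ge s (t₀ - 1 / 2 + 1)).imp (fun h => ⟨hs.1, h⟩)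
      fun h => ⟨h, by linarith [hs.2]⟩
  have hfS : MemLp (S.indicator f) q volume := by
    refine (memLp_indicator_iff_restrict measurableSet_Ioo).2 (MemLp.mono_measure
      (Measure.restrict_mono hS le_rfl) ((hf _).restrict_union measurableSet_Ioo
        measurableSet_Icc ?_))
    rw [← Measure.restrict_congr_set Ioo_ae_eq_Icc]
    exact hf _
  -- Near `t₀` every window `(t, t + 1)` lies in `S`, where `f` agrees with `S.indicator f`.
  refine (continuous_comp_add_left_toLp_of_memLp hq hfS).continuousAt.congr ?_
  filter_upwards [Metric.ball_mem_nhds t₀ (by norm_num : (0:ℝ) < 1 / 2)] with t ht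
  rw [Metric.mem_ball, Real.dist_eq, abs_lt] at ht
  refine MemLp.toLp_congr _ _ ((ae_restrict_iff' measurableSet_Ioo).2 (.of_forall fun θ hθ => ?_))
  have hmem : t + θ ∈ S := ⟨by linarith [hθ.1], by linarith [hθ.2]⟩
  exact indicator_of_mem hmem f

end Continuity

section Glue

variable {q : ℝ≥0∞} (V W : ℝ → Lp X q μ₀)

noncomputable def glue (s : ℝ) : X :=
  V ⌊s⌋ (Int.fract s)

theorem glue_intCast_add (n : ℤ) {θ : ℝ} (hθ : θ ∈ Ico (0:ℝ) 1) : glue V (n + θ) = V n θ := by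
  simp [glue, Int.floor_intCast_add, Int.floor_eq_zero_iff.2 hθ, Int.fract_eq_self.2 hθ]

theorem glue_intCast_add_ae_eq (n : ℤ) : (fun θ => glue V (n + θ)) =ᵐ[μ₀] V n :=
  (ae_restrict_iff' measurableSet_Ioo).2
    (.of_forall fun _ hθ => glue_intCast_add V n (Ioo_subset_Ico_self hθ))

theorem memLp_glue_restrict_intCast (n : ℤ) :
    MemLp (glue V) q (volume.restrict (Ioo (n : ℝ) (n + 1))) :=
  memLp_comp_add_left_iff.1 ((Lp.memLp (V n)).ae_eq (glue_intCast_add_ae_eq V n).symm)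

theorem eLpNorm_glue_restrict_intCast (n : ℤ) :
    eLpNorm (glue V) q (volume.restrict (Ioo (n : ℝ) (n + 1))) = eLpNorm (V n) q μ₀ := by
  rw [← eLpNorm_comp_add_left, eLpNorm_congr_ae (glue_intCast_add_ae_eq V n)]

theorem glue_sub_ae_eq : glue (V - W) =ᵐ[volume] glue V - glue W :=
  ae_eq_of_comp_add_intCast fun n => (glue_intCast_add_ae_eq (V - W) n).trans
    ((Lp.coeFn_sub _ _).trans ((glue_intCast_add_ae_eq V n).sub (glue_intCast_add_ae_eq W n)).symm)

noncomputable def glueLp (t : ℝ) : Lp X q μ₀ :=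
  (memLp_comp_add_left_iff.2 (memLp_restrict_Ioo_of_intCast (memLp_glue_restrict_intCast V) t)).toLp
    fun θ => glue V (t + θ)

theorem glueLp_intCast (n : ℤ) : glueLp V n = V n :=
  (MemLp.toLp_congr _ (Lp.memLp _) (glue_intCast_add_ae_eq V n)).trans (Lp.toLp_coeFn _ _)

theorem glueLp_congr (h : ∀ n : ℤ, V n = W n) : glueLp V = glueLp W := by
  have : glue V = glue W := funext fun s => by simp only [glue, h]
  funext t
  exact MemLp.toLp_congr _ _ (.of_forall fun θ => congrFun this (t + θ))

theorem glueLp_sub (t : ℝ) : glueLp (V - W) t = glueLp V t - glueLp W t := by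
  rw [glueLp, glueLp, glueLp, ← MemLp.toLp_sub]
  exact MemLp.toLp_congr _ _ (comp_add_left_ae_eq (glue_sub_ae_eq V W) t)

variable [Fact (1 ≤ q)]

theorem norm_glueLp_le (t : ℝ) : ‖glueLp V t‖ ≤ ‖V ⌊t⌋‖ + ‖V (⌊t⌋ + 1)‖ := by
  have h := eLpNorm_restrict_Ioo_le_of_intCast (memLp_glue_restrict_intCast V) Fact.out t
  have h₂ := eLpNorm_glue_restrict_intCast V (⌊t⌋ + 1)
  push_cast at h₂
  rw [eLpNorm_glue_restrict_intCast, h₂] at h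
  rw [glueLp, Lp.norm_toLp, eLpNorm_comp_add_left, Lp.norm_def, Lp.norm_def,
    ← ENNReal.toReal_add (Lp.eLpNorm_ne_top _) (Lp.eLpNorm_ne_top _)]
  exact ENNReal.toReal_mono (ENNReal.add_ne_top.2 ⟨Lp.eLpNorm_ne_top _, Lp.eLpNorm_ne_top _⟩) h

theorem dist_glueLp_le (t : ℝ) :
    dist (glueLp V t) (glueLp W t) ≤ dist (V ⌊t⌋) (W ⌊t⌋) + dist (V (⌊t⌋ + 1)) (W (⌊t⌋ + 1)) := by
  simpa only [dist_eq_norm, glueLp_sub, Pi.sub_apply] using norm_glueLp_le (V - W) t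

theorem continuous_glueLp (hq : q ≠ ∞) : Continuous (glueLp V) :=
  continuous_comp_add_left_toLp hq (memLp_restrict_Ioo_of_intCast (memLp_glue_restrict_intCast V))

end Glue

section Projection

variable {q : ℝ≥0∞}

def IsBochnerTransform (V : ℝ → Lp X q μ₀) : Prop :=
  ∃ (u : ℝ → X) (h : ∀ t : ℝ, MemLp (fun θ => u (t + θ)) q μ₀),
    ∀ t : ℝ, V t = (h t).toLp (fun θ => u (t + θ))

theorem isBochnerTransform_glueLp (V : ℝ → Lp X q μ₀) : IsBochnerTransform (glueLp V) :=
  ⟨glue V, _, fun _ => rfl⟩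

theorem IsBochnerTransform.glueLp_eq {V : ℝ → Lp X q μ₀} (hV : IsBochnerTransform V) :
    glueLp V = V := by
  obtain ⟨u, hu, hVu⟩ := hV
  have hglue : glue V =ᵐ[volume] u := ae_eq_of_comp_add_intCast fun n =>
    (glue_intCast_add_ae_eq V n).trans (by rw [hVu]; exact (hu n).coeFn_toLp)
  funext t
  rw [hVu t]
  exact MemLp.toLp_congr _ _ (comp_add_left_ae_eq hglue t)

variable [Fact (1 ≤ q)]

theorem glueLp_eq_zero {V : ℝ → Lp X q μ₀} (hV : ∀ n : ℤ, V n = 0) : glueLp V = 0 := by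
  rw [glueLp_congr V 0 hV]
  funext t
  simpa using norm_glueLp_le (0 : ℝ → Lp X q μ₀) t

noncomputable def bochnerProj (hq : q ≠ ∞) (V : ℝ →ᵇ Lp X q μ₀) : ℝ →ᵇ Lp X q μ₀ :=
  .ofNormedAddCommGroup (glueLp V) (continuous_glueLp V hq) (2 * ‖V‖) fun t => by
    linarith [norm_glueLp_le V t, V.norm_coe_le_norm ⌊t⌋, V.norm_coe_le_norm (⌊t⌋ + 1)]

theorem bochnerProj_intCast (hq : q ≠ ∞) (V : ℝ →ᵇ Lp X q μ₀) (n : ℤ) :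
    bochnerProj hq V n = V n :=
  glueLp_intCast V n

theorem lipschitzWith_bochnerProj (hq : q ≠ ∞) : LipschitzWith 2 (bochnerProj (X := X) hq) :=
  LipschitzWith.of_dist_le_mul fun V W => (BoundedContinuousFunction.dist_le (by positivity)).2
    fun t => (dist_glueLp_le V W t).trans <| by
      rw [NNReal.coe_ofNat, two_mul]
      exact add_le_add (V.dist_coe_le_dist _) (V.dist_coe_le_dist _)

theorem isBochnerTransform_iff_bochnerProj_eq (hq : q ≠ ∞) (V : ℝ →ᵇ Lp X q μ₀) :
    IsBochnerTransform V ↔ bochnerProj hq V = V :=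
  ⟨fun hV => BoundedContinuousFunction.ext (congrFun hV.glueLp_eq),
    fun hV => hV ▸ isBochnerTransform_glueLp V⟩

end Projection

end BochnerTransform

open BochnerTransform

/-- The range of the Bochner transform `B : BS^p(ℝ,X) → BC(ℝ, L^p(0,1;X))` is a closed
subspace admitting the topological complement
`M = {V ∈ BC(ℝ,L^p(0,1;X)) : V(n) = 0 for all n ∈ ℤ}`:
`BC(ℝ, L^p(0,1;X)) = Im(B) ⊕ M`. -/
theorem stmt_7 (q : ℝ≥0∞) [Fact (1 ≤ q)] (hq : q ≠ ⊤)
    (ImB : Set (BoundedContinuousFunction ℝ (Lp X q (volume.restrict (Ioo (0:ℝ) 1)))))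
    (hImB : ImB = {V | ∃ (u : ℝ → X)
      (h : ∀ t : ℝ, MemLp (fun θ => u (t + θ)) q (volume.restrict (Ioo (0:ℝ) 1))),
      ∀ t : ℝ, V t = (h t).toLp (fun θ => u (t + θ))})
    (M : Set (BoundedContinuousFunction ℝ (Lp X q (volume.restrict (Ioo (0:ℝ) 1)))))
    (hM : M = {V | ∀ n : ℤ, V (n : ℝ) = 0}) :
    IsClosed ImB ∧ IsClosed M ∧
      (∀ V, ∃ W ∈ ImB, ∃ Z ∈ M, V = W + Z) ∧
      (∀ V ∈ ImB, V ∈ M → V = 0) := by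
  have hImB' : ImB = {V | bochnerProj hq V = V} := by
    rw [hImB]
    exact Set.ext fun V => isBochnerTransform_iff_bochnerProj_eq hq V
  subst hImB' hM
  refine ⟨isClosed_eq (lipschitzWith_bochnerProj hq).continuous continuous_id, ?_, ?_, ?_⟩
  · simp only [ofPred_forall]
    exact isClosed_iInter fun n => isClosed_eq (continuous_eval_const _) continuous_const
  · intro V
    refine ⟨bochnerProj hq V, ?_, V - bochnerProj hq V, fun n => ?_, by abel⟩
    · exact (isBochnerTransform_iff_bochnerProj_eq hq _).1 (isBochnerTransform_glueLp V)
    · rw [BoundedContinuousFunction.sub_apply, bochnerProj_intCast, sub_self]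
  · intro V hV hVM
    rw [← hV]
    exact BoundedContinuousFunction.ext (congrFun (glueLp_eq_zero hVM))
end

section
/- If $\mathcal{K}$ is a compact subset of $AA(\mathbb{R},E)$ (with the sup norm), then the set $S = \{U(t) : U \in \mathcal{K}, t \in \mathbb{R}\}$ is relatively compact in $E$. -/
open MeasureTheory Set Filter Topology
open scoped ENNReal

variable {X : Type*} [NormedAddCommGroup X]

/-!
Each `U ∈ 𝒦` has totally bounded range: given a sequence `U (t k)`, almost automorphy along
`t` yields a subsequence with `U (0 + t (φ k)) → w 0`. Compactness of `𝒦` gives a finite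
`ε`-net `F ⊆ 𝒦` in the sup norm, so `S` lies within `ε` of the totally bounded set
`⋃ V ∈ F, range V`. Hence `S` is totally bounded, and its closure is compact since `E` is
complete.
-/

theorem totallyBounded_of_forall_exists_cauchySeq_subseq {α : Type*} [UniformSpace α]
    {s : Set α}
    (h : ∀ u : ℕ → α, (∀ n, u n ∈ s) → ∃ φ : ℕ → ℕ, StrictMono φ ∧ CauchySeq (u ∘ φ)) :
    TotallyBounded s := by
  intro V hV
  by_contra! hcover
  obtain ⟨u, hus, hsep⟩ : ∃ u : ℕ → α,
      (∀ n, u n ∈ s) ∧ ∀ n m, m < n → u m ∉ UniformSpace.ball (u n) V := by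
    simp only [not_subset, mem_iUnion₂, not_exists, exists_prop] at hcover
    simpa only [forall_and, forall_mem_image, not_and] using! seq_of_forall_finite_exists hcover
  obtain ⟨φ, hφ, hcauchy⟩ := h u hus
  obtain ⟨N, hN⟩ : ∃ N, ∀ p q, p ≥ N → q ≥ N → (u (φ p), u (φ q)) ∈ V :=
    hcauchy.mem_entourage hV
  exact hsep (φ (N + 1)) (φ N) (hφ N.lt_add_one) (hN (N + 1) N N.le_succ le_rfl)

theorem Metric.totallyBounded_of_forall_exists_totallyBounded_near {α : Type*}
    [PseudoMetricSpace α] {s : Set α}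
    (h : ∀ ε > 0, ∃ t, TotallyBounded t ∧ ∀ x ∈ s, ∃ y ∈ t, dist x y < ε) :
    TotallyBounded s := by
  refine Metric.totallyBounded_iff.2 fun ε hε => ?_
  obtain ⟨t, ht, hst⟩ := h (ε / 2) (half_pos hε)
  obtain ⟨F, hF, htF⟩ := Metric.totallyBounded_iff.1 ht (ε / 2) (half_pos hε)
  refine ⟨F, hF, fun x hx => ?_⟩
  obtain ⟨y, hy, hxy⟩ := hst x hx
  obtain ⟨z, hz, hyz⟩ := mem_iUnion₂.1 (htF hy)
  refine mem_iUnion₂.2 ⟨z, hz, ?_⟩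
  calc dist x z ≤ dist x y + dist y z := dist_triangle x y z
    _ < ε / 2 + ε / 2 := add_lt_add hxy hyz
    _ = ε := add_halves ε

theorem IsAlmostAutomorphic.totallyBounded_range {E : Type*} [NormedAddCommGroup E]
    {v : ℝ → E} (hv : IsAlmostAutomorphic v) : TotallyBounded (range v) := by
  refine totallyBounded_of_forall_exists_cauchySeq_subseq fun u hu => ?_
  choose t ht using hu
  obtain rfl : v ∘ t = u := funext ht
  obtain ⟨φ, hφ, w, hw, -⟩ := hv.2 t
  have hconv := hw 0
  simp only [zero_add] at hconv
  exact ⟨φ, hφ, hconv.cauchySeq⟩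

/-- If `𝒦` is a compact subset of `AA(ℝ,E)` (with the sup norm), then
`S = {U(t) : U ∈ 𝒦, t ∈ ℝ}` is relatively compact in `E`. -/
theorem stmt_9 {E : Type*} [NormedAddCommGroup E] [CompleteSpace E]
    (𝒦 : Set (BoundedContinuousFunction ℝ E)) (hc : IsCompact 𝒦)
    (hAA : ∀ U ∈ 𝒦, IsAlmostAutomorphic (fun t => U t)) :
    IsCompact (closure {x : E | ∃ U ∈ 𝒦, ∃ t : ℝ, U t = x}) := by
  refine TotallyBounded.isCompact_of_isClosed ?_ isClosed_closure
  refine (Metric.totallyBounded_of_forall_exists_totallyBounded_near fun ε hε => ?_).closure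
  obtain ⟨F, hF𝒦, hF, h𝒦F⟩ := Metric.finite_approx_of_totallyBounded hc.totallyBounded ε hε
  refine ⟨⋃ V ∈ F, range V,
    (totallyBounded_biUnion hF).2 fun V hV => (hAA V (hF𝒦 hV)).totallyBounded_range, ?_⟩
  rintro _ ⟨U, hU, t, rfl⟩
  obtain ⟨V, hV, hUV⟩ := mem_iUnion₂.1 (h𝒦F hU)
  exact ⟨V t, mem_biUnion hV (mem_range_self t),
    (BoundedContinuousFunction.dist_coe_le_dist t).trans_lt hUV⟩
end

section
/- Let $u:\mathbb{R}\to X$ and $v \in AP(\mathbb{R},Y)$ satisfy: for every $\varepsilon>0$ there exists $M>0$ such that for all $t_1,t_2\in\mathbb{R}$, $\|u(t_1)-u(t_2)\|_X \le \varepsilon/2 + M\|v(t_1)-v(t_2)\|_Y$. Then $u \in AP(\mathbb{R},X)$. -/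
open MeasureTheory Set Filter Topology
open scoped ENNReal

variable {X : Type*} [NormedAddCommGroup X]

/-! The hypothesis makes `u` uniformly continuous relative to `v`: for every `ε` there is a `δ`
with `‖v t₁ - v t₂‖ ≤ δ → ‖u t₁ - u t₂‖ ≤ ε`. Hence `u` inherits the continuity of `v`, and
every `δ`-almost period of `v` is an `ε`-almost period of `u`. -/

theorem exists_pos_forall_dist_le_of_dist_le_add_mul {α β γ : Type*} [PseudoMetricSpace β]
    [PseudoMetricSpace γ] {u : α → β} {v : α → γ}
    (h : ∀ ε > 0, ∃ M : ℝ, ∀ a b, dist (u a) (u b) ≤ ε + M * dist (v a) (v b))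
    {ε : ℝ} (hε : 0 < ε) :
    ∃ δ > 0, ∀ a b, dist (v a) (v b) ≤ δ → dist (u a) (u b) ≤ ε := by
  obtain ⟨M, hM⟩ := h (ε / 2) (half_pos hε)
  refine ⟨ε / 2 / (|M| + 1), by positivity, fun a b hab => ?_⟩
  have hM_le : M ≤ |M| + 1 := (le_abs_self M).trans (le_add_of_nonneg_right zero_le_one)
  calc dist (u a) (u b) ≤ ε / 2 + M * dist (v a) (v b) := hM a b
    _ ≤ ε / 2 + (|M| + 1) * (ε / 2 / (|M| + 1)) := by gcongr
    _ = ε := by field_simp; ring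

theorem Continuous.of_dist_le_add_mul {α β γ : Type*} [TopologicalSpace α]
    [PseudoMetricSpace β] [PseudoMetricSpace γ] {u : α → β} {v : α → γ} (hv : Continuous v)
    (h : ∀ ε > 0, ∃ M : ℝ, ∀ a b, dist (u a) (u b) ≤ ε + M * dist (v a) (v b)) :
    Continuous u := by
  refine continuous_iff_continuousAt.2 fun x => Metric.tendsto_nhds.2 fun ε hε => ?_
  obtain ⟨δ, hδ, huv⟩ := exists_pos_forall_dist_le_of_dist_le_add_mul h (half_pos hε)
  filter_upwards [Metric.tendsto_nhds.1 (hv.tendsto x) δ hδ] with y hy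
  exact (huv y x hy.le).trans_lt (half_lt_self hε)

theorem IsAlmostPeriodic.of_dist_le_add_mul {E F : Type*} [NormedAddCommGroup E]
    [NormedAddCommGroup F] {u : ℝ → E} {v : ℝ → F} (hv : IsAlmostPeriodic v)
    (h : ∀ ε > 0, ∃ M : ℝ, ∀ a b, dist (u a) (u b) ≤ ε + M * dist (v a) (v b)) :
    IsAlmostPeriodic u := by
  refine ⟨hv.1.of_dist_le_add_mul h, fun ε hε => ?_⟩
  obtain ⟨δ, hδ, huv⟩ := exists_pos_forall_dist_le_of_dist_le_add_mul h hε
  obtain ⟨ℓ, hℓ, hv_periods⟩ := hv.2 δ hδ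
  refine ⟨ℓ, hℓ, fun α => ?_⟩
  obtain ⟨τ, hτα, hτ⟩ := hv_periods α
  refine ⟨τ, hτα, fun t => ?_⟩
  rw [← dist_eq_norm]
  exact huv _ _ (by rw [dist_eq_norm]; exact hτ t)

/-- If `v ∈ AP(ℝ,Y)` and `u : ℝ → X` satisfies: for every `ε > 0` there is `M > 0` with
`‖u(t₁)-u(t₂)‖ ≤ ε/2 + M‖v(t₁)-v(t₂)‖` for all `t₁,t₂`, then `u ∈ AP(ℝ,X)`. -/
theorem stmt_14 {Y : Type*} [NormedAddCommGroup Y]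
    (u : ℝ → X) (v : ℝ → Y) (hv : IsAlmostPeriodic v)
    (h : ∀ ε > (0:ℝ), ∃ M > (0:ℝ), ∀ t₁ t₂ : ℝ,
      ‖u t₁ - u t₂‖ ≤ ε / 2 + M * ‖v t₁ - v t₂‖) :
    IsAlmostPeriodic u := by
  refine hv.of_dist_le_add_mul fun ε hε => ?_
  obtain ⟨M, -, hM⟩ := h ε hε
  refine ⟨M, fun t₁ t₂ => ?_⟩
  rw [dist_eq_norm, dist_eq_norm]
  linarith [hM t₁ t₂]
end

section
/- Let $u:\mathbb{R}\to X$ and $v \in AA(\mathbb{R},Y)$ satisfy: for every $\varepsilon>0$ there exists $M>0$ such that for all $t_1,t_2\in\mathbb{R}$, $\|u(t_1)-u(t_2)\|_X \le \varepsilon/2 + M\|v(t_1)-v(t_2)\|_Y$. Then $u \in AA(\mathbb{R},X)$. -/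
open MeasureTheory Set Filter Topology
open scoped ENNReal

variable {X : Type*} [NormedAddCommGroup X]

/-! On the set `S = {(u t, v t)}` the hypothesis says that the first coordinate is uniformly
controlled by the second, and this closed condition passes to `closure S`. So `u` inherits
continuity from `v`, `u (t + s k)` is Cauchy because `v (t + s k)` is, and its limit `w' t`
satisfies `(w' t, w t) ∈ closure S`; then `w (t - s k) → v t` forces `w' (t - s k) → u t`. -/

def SndControlsFst {α β : Type*} [PseudoMetricSpace α] [PseudoMetricSpace β]
    (S : Set (α × β)) : Prop :=
  ∀ ε > (0 : ℝ), ∃ M : ℝ, ∀ p ∈ S, ∀ q ∈ S, dist p.1 q.1 ≤ ε + M * dist p.2 q.2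

namespace SndControlsFst

variable {α β : Type*} [PseudoMetricSpace α] [PseudoMetricSpace β] {S : Set (α × β)}

theorem closure (hS : SndControlsFst S) : SndControlsFst (closure S) := by
  intro ε hε
  obtain ⟨M, hM⟩ := hS ε hε
  refine ⟨M, fun p hp q hq => ?_⟩
  have hclosed : IsClosed {r : (α × β) × (α × β) | dist r.1.1 r.2.1 ≤ ε + M * dist r.1.2 r.2.2} :=
    isClosed_le (by fun_prop) (by fun_prop)
  have hsub : _root_.closure (S ×ˢ S) ⊆ _ :=
    closure_minimal (fun r ⟨hr₁, hr₂⟩ => hM r.1 hr₁ r.2 hr₂) hclosed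
  rw [closure_prod_eq] at hsub
  exact hsub (mk_mem_prod hp hq)

theorem tendsto_dist_fst (hS : SndControlsFst S) {γ : Type*} {l : Filter γ} {p q : γ → α × β}
    (hp : ∀ k, p k ∈ S) (hq : ∀ k, q k ∈ S)
    (h : Tendsto (fun k => dist (p k).2 (q k).2) l (𝓝 0)) :
    Tendsto (fun k => dist (p k).1 (q k).1) l (𝓝 0) := by
  refine Metric.tendsto_nhds.2 fun ε hε => ?_
  obtain ⟨M, hM⟩ := hS (ε / 2) (half_pos hε)
  have hsmall : ∀ᶠ k in l, M * dist (p k).2 (q k).2 < ε / 2 := by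
    have : Tendsto (fun k => M * dist (p k).2 (q k).2) l (𝓝 0) := by
      simpa using h.const_mul M
    exact this.eventually (gt_mem_nhds (half_pos hε))
  filter_upwards [hsmall] with k hk
  rw [Real.dist_0_eq_abs, abs_of_nonneg dist_nonneg]
  linarith [hM (p k) (hp k) (q k) (hq k)]

theorem tendsto_fst (hS : SndControlsFst S) {γ : Type*} {l : Filter γ} {p : γ → α × β} {y : α × β}
    (hp : ∀ k, p k ∈ S) (hy : y ∈ S) (h : Tendsto (fun k => (p k).2) l (𝓝 y.2)) :
    Tendsto (fun k => (p k).1) l (𝓝 y.1) :=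
  tendsto_iff_dist_tendsto_zero.2 <|
    hS.tendsto_dist_fst (q := fun _ => y) hp (fun _ => hy) (tendsto_iff_dist_tendsto_zero.1 h)

theorem cauchySeq_fst (hS : SndControlsFst S) {p : ℕ → α × β} (hp : ∀ k, p k ∈ S)
    (h : CauchySeq fun k => (p k).2) : CauchySeq fun k => (p k).1 :=
  cauchySeq_iff_tendsto_dist_atTop_0.2 <|
    hS.tendsto_dist_fst (fun n => hp n.1) (fun n => hp n.2)
      (cauchySeq_iff_tendsto_dist_atTop_0.1 h)

end SndControlsFst

theorem sndControlsFst_range_of_forall_norm_sub_le {Y : Type*} [NormedAddCommGroup Y]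
    {u : ℝ → X} {v : ℝ → Y}
    (h : ∀ ε > (0:ℝ), ∃ M > (0:ℝ), ∀ t₁ t₂ : ℝ, ‖u t₁ - u t₂‖ ≤ ε / 2 + M * ‖v t₁ - v t₂‖) :
    SndControlsFst (range fun t => (u t, v t)) := by
  intro ε hε
  obtain ⟨M, -, hM⟩ := h (2 * ε) (by positivity)
  refine ⟨M, ?_⟩
  rintro _ ⟨t₁, rfl⟩ _ ⟨t₂, rfl⟩
  simpa [dist_eq_norm] using hM t₁ t₂

/-- If `v ∈ AA(ℝ,Y)` and `u : ℝ → X` satisfies: for every `ε > 0` there is `M > 0` with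
`‖u(t₁)-u(t₂)‖ ≤ ε/2 + M‖v(t₁)-v(t₂)‖` for all `t₁,t₂`, then `u ∈ AA(ℝ,X)`. -/
theorem stmt_15 {Y : Type*} [NormedAddCommGroup Y] [CompleteSpace X]
    (u : ℝ → X) (v : ℝ → Y) (hv : IsAlmostAutomorphic v)
    (h : ∀ ε > (0:ℝ), ∃ M > (0:ℝ), ∀ t₁ t₂ : ℝ,
      ‖u t₁ - u t₂‖ ≤ ε / 2 + M * ‖v t₁ - v t₂‖) :
    IsAlmostAutomorphic u := by
  obtain ⟨hvc, hvaa⟩ := hv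
  have hS := sndControlsFst_range_of_forall_norm_sub_le h
  have hgraph : ∀ t, (u t, v t) ∈ range fun t => (u t, v t) := mem_range_self
  refine ⟨continuous_iff_continuousAt.2 fun t₀ => ?_, fun s => ?_⟩
  · exact hS.tendsto_fst (p := fun t => (u t, v t)) hgraph (hgraph t₀) (hvc.tendsto t₀)
  obtain ⟨φ, hφ, w, hvw, hwv⟩ := hvaa s
  have hcauchy : ∀ t, CauchySeq fun k => u (t + s (φ k)) := fun t =>
    hS.cauchySeq_fst (p := fun k => (u (t + s (φ k)), v (t + s (φ k)))) (fun _ => hgraph _)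
      (hvw t).cauchySeq
  choose w' hw' using fun t => cauchySeq_tendsto_of_complete (hcauchy t)
  have hlim : ∀ t, (w' t, w t) ∈ closure (range fun t => (u t, v t)) := fun t =>
    mem_closure_of_tendsto ((hw' t).prodMk_nhds (hvw t)) (Eventually.of_forall fun _ => hgraph _)
  refine ⟨φ, hφ, w', hw', fun t => ?_⟩
  exact hS.closure.tendsto_fst (p := fun k => (w' (t - s (φ k)), w (t - s (φ k))))
    (fun _ => hlim _) (subset_closure (hgraph t)) (hwv t)
end

section
/- Let $f:\mathbb{R}\times X\to Y$ satisfy: (a) there are $a>0$ and $b\in S^q_{aa}(\mathbb{R})$ with $\|f(t,x)\|\le a\|x\|^{p/q}+b(t)$ for all $x$ and a.e. $t$; (b) $f(t,\cdot)$ continuous for a.e. $t$; (c) $f(\cdot,x)\in BS^q(\mathbb{R},Y)$ for each $x$; (d) $f(\cdot,x)\in L^q_{loc}(\mathbb{R},Y)$ for all $x$. Then for every compact set $K\subset X$, the map $\tilde f_K:\mathbb{R}\to C(K,Y)$, $\tilde f_K(t)=f(t,\cdot)|_K$, belongs to $L^q_{loc}(\mathbb{R}, C(K,Y))$ (in particular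 $\tilde f_K$ is strongly measurable on bounded intervals). -/
/-
Carathéodory functions give strongly measurable maps into `C(K, Y)`. For compact metric `K` the
sup-distance is a supremum over a countable dense `D ⊆ K`, so `t ↦ dist (g t) h` is measurable as
soon as the evaluations `t ↦ g t x`, `x ∈ D`, are; by continuity of each `g t`, the map `g` takes
values in `C(K, Z)` with `Z` the closure of the (separable) ranges of these evaluations, a separable
set. Measurable distances and separable range give strong measurability. For `t ↦ f(t, ·)|_K` the
evaluations are made measurable by changing `f` on a null set of times, and the growth condition
bounds `‖f(t, ·)|_K‖` by `C + |b(t)|` with `|b|^q` locally integrable.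
-/

open MeasureTheory Set Filter Topology
open scoped ENNReal

variable {X : Type*} [NormedAddCommGroup X]

open TopologicalSpace

theorem stronglyMeasurable_of_isSeparable_range_of_measurable_dist {α E : Type*}
    [MeasurableSpace α] [PseudoMetricSpace E] {g : α → E} (hsep : IsSeparable (range g))
    (hdist : ∀ y, Measurable fun t => dist (g t) y) : StronglyMeasurable g := by
  borelize E
  refine stronglyMeasurable_iff_measurable_separable.2 ⟨?_, hsep⟩
  obtain ⟨D, hDc, hD⟩ := hsep
  refine measurable_of_isOpen fun U hU => ?_
  have hpreimage : g ⁻¹' U = ⋃ y ∈ D, ⋃ (r : ℚ) (_ : Metric.ball y (2 * r) ⊆ U),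
      {t | dist (g t) y < r} := by
    ext t
    simp only [mem_preimage, mem_iUnion, mem_ofPred_eq, exists_prop]
    constructor
    · intro htU
      obtain ⟨ε, hε, hball⟩ := Metric.isOpen_iff.1 hU _ htU
      obtain ⟨y, hyD, hy⟩ := Metric.mem_closure_iff.1 (hD ⟨t, rfl⟩) (ε / 3) (by linarith)
      obtain ⟨r, hyr, hrε⟩ := exists_rat_btwn hy
      refine ⟨y, hyD, r, fun z hz => hball ?_, hyr⟩
      rw [Metric.mem_ball] at hz ⊢
      linarith [dist_triangle z y (g t), dist_comm y (g t)]
    · rintro ⟨y, -, r, hsub, hlt⟩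
      exact hsub (Metric.mem_ball.2 (by linarith [dist_nonneg (x := g t) (y := y)]))
  rw [hpreimage]
  exact .biUnion hDc fun y _ => .iUnion fun _ => .iUnion fun _ => hdist y measurableSet_Iio

namespace ContinuousMap

variable {K Y : Type*} [PseudoMetricSpace Y]

theorem dist_eq_iSup_of_dense [TopologicalSpace K] [CompactSpace K] {D : Set K} (hD : Dense D)
    (f h : C(K, Y)) :
    dist f h = ⨆ x : D, dist (f x) (h x) := by
  have hbdd : BddAbove (range fun x : D => dist (f x) (h x)) :=
    ⟨dist f h, forall_mem_range.2 fun x => dist_apply_le_dist (x : K)⟩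
  refine le_antisymm ((dist_le (Real.iSup_nonneg fun _ => dist_nonneg)).2 fun x => ?_)
    (Real.iSup_le (fun x => dist_apply_le_dist (x : K)) dist_nonneg)
  have hclosed : IsClosed {x | dist (f x) (h x) ≤ ⨆ x : D, dist (f x) (h x)} :=
    isClosed_le (by fun_prop) continuous_const
  exact hclosed.closure_subset_iff.2 (fun x hx => le_ciSup hbdd ⟨x, hx⟩) (hD x)

theorem isSeparable_setOf_range_subset [PseudoMetricSpace K] [CompactSpace K] {Z : Set Y}
    (hZ : IsSeparable Z) :
    IsSeparable {h : C(K, Y) | range h ⊆ Z} := by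
  have : SeparableSpace Z := hZ.separableSpace
  let ι : C(Z, Y) := ⟨Subtype.val, continuous_subtype_val⟩
  refine (isSeparable_range (continuous_postcomp (X := K) ι)).mono fun h hZh => ?_
  exact ⟨⟨fun x => ⟨h x, hZh ⟨x, rfl⟩⟩, by fun_prop⟩, rfl⟩

theorem stronglyMeasurable_of_dense [PseudoMetricSpace K] [CompactSpace K] {α : Type*}
    [MeasurableSpace α] {g : α → C(K, Y)} {D : Set K} (hDc : D.Countable) (hD : Dense D)
    (hg : ∀ x ∈ D, StronglyMeasurable fun t => g t x) : StronglyMeasurable g := by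
  have : Countable D := hDc.to_subtype
  set Z := ⋃ x : D, range fun t => g t x
  have hZ : IsSeparable (closure Z) :=
    (isSeparable_iUnion.2 fun x : D => (hg x x.2).isSeparable_range).closure
  have hrange : ∀ t, range (g t) ⊆ closure Z := fun t => by
    rw [← image_univ, ← hD.closure_eq]
    refine (image_closure_subset_closure_image (g t).continuous).trans (closure_mono ?_)
    rintro _ ⟨x, hx, rfl⟩
    exact mem_iUnion.2 ⟨⟨x, hx⟩, t, rfl⟩
  refine stronglyMeasurable_of_isSeparable_range_of_measurable_dist
    ((isSeparable_setOf_range_subset hZ).mono (range_subset_iff.2 hrange)) fun h => ?_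
  simp_rw [dist_eq_iSup_of_dense hD]
  exact .iSup fun x => ((hg x x.2).dist stronglyMeasurable_const).measurable

end ContinuousMap

theorem exists_stronglyMeasurable_continuousMap_ae_eq {α K Y : Type*} [MeasurableSpace α]
    {μ : Measure α} [PseudoMetricSpace K] [CompactSpace K] [PseudoMetricSpace Y] [Nonempty Y]
    {f : α → K → Y} (hf : ∀ x, AEStronglyMeasurable (fun t => f t x) μ)
    (hcont : ∀ᵐ t ∂μ, Continuous (f t)) :
    ∃ g : α → C(K, Y), StronglyMeasurable g ∧ ∀ᵐ t ∂μ, ⇑(g t) = f t := by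
  classical
  obtain ⟨D, hDc, hD⟩ := exists_countable_dense K
  have hgood : ∀ᵐ t ∂μ, Continuous (f t) ∧ ∀ x ∈ D, f t x = (hf x).mk _ t :=
    hcont.and ((ae_ball_iff hDc).2 fun x _ => (hf x).ae_eq_mk)
  obtain ⟨A, hAae, hAm, hA⟩ := hgood.exists_measurable_mem
  let y₀ : Y := Classical.arbitrary Y
  let g : α → C(K, Y) := fun t => if ht : t ∈ A then ⟨f t, (hA t ht).1⟩ else .const K y₀
  refine ⟨g, ContinuousMap.stronglyMeasurable_of_dense hDc hD fun x hx => ?_, ?_⟩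
  · have hgx : (fun t => g t x) = A.piecewise ((hf x).mk _) fun _ => y₀ := by
      ext t
      by_cases ht : t ∈ A
      · simp [g, ht, (hA t ht).2 x hx]
      · simp [g, ht]
    rw [hgx]
    exact (hf x).stronglyMeasurable_mk.piecewise hAm stronglyMeasurable_const
  · filter_upwards [hAae] with t ht
    simp [g, ht]

theorem locallyIntegrable_rpow_norm_of_norm_le_const_add {α E F : Type*} [MeasurableSpace α]
    [TopologicalSpace α] {μ : Measure α} [IsLocallyFiniteMeasure μ] [NormedAddCommGroup E]
    [NormedAddCommGroup F] {u : α → E} {v : α → F} {q C : ℝ} (hq : 1 ≤ q)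
    (hu : AEStronglyMeasurable u μ) (hv : LocallyIntegrable (fun t => ‖v t‖ ^ q) μ)
    (hle : ∀ᵐ t ∂μ, ‖u t‖ ≤ C + ‖v t‖) : LocallyIntegrable (fun t => ‖u t‖ ^ q) μ := by
  refine (((locallyIntegrable_const (|C| ^ q)).add hv).smul (2 ^ (q - 1) : ℝ)).mono
    (hu.norm.aemeasurable.pow_const q).aestronglyMeasurable ?_
  filter_upwards [hle] with t ht
  simp only [Pi.add_apply, Pi.smul_apply, smul_eq_mul]
  rw [Real.norm_of_nonneg (by positivity), Real.norm_of_nonneg (by positivity)]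
  calc ‖u t‖ ^ q ≤ (|C| + ‖v t‖) ^ q :=
        Real.rpow_le_rpow (norm_nonneg _) (ht.trans (by gcongr; exact le_abs_self C))
          (by linarith)
    _ ≤ 2 ^ (q - 1) * (|C| ^ q + ‖v t‖ ^ q) := by
        have := NNReal.rpow_add_le_mul_rpow_add_rpow ‖C‖₊ ‖v t‖₊ hq
        exact_mod_cast this

theorem stmt_16_general {Y : Type*} [NormedAddCommGroup Y] (p q : ℝ) (hp : 1 ≤ p) (hq : 1 ≤ q)
    (f : ℝ → X → Y)
    (H1 : ∃ a > (0:ℝ), ∃ b : ℝ → ℝ, StepanovAA q b ∧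
      ∀ᵐ t : ℝ, ∀ x : X, ‖f t x‖ ≤ a * ‖x‖ ^ (p / q) + b t)
    (H2 : ∀ᵐ t : ℝ, Continuous (f t))
    (hx : ∀ x : X, MemBSp q (fun t => f t x))
    (K : Set X) [CompactSpace K] :
    ∃ g : ℝ → ContinuousMap K Y,
      (∀ᵐ t : ℝ, ∀ x : K, g t x = f t (x : X)) ∧
      AEStronglyMeasurable g volume ∧
      LocallyIntegrable (fun t => ‖g t‖ ^ q) volume := by
  obtain ⟨a, -, b, hb, hgrowth⟩ := H1
  obtain ⟨g, hg, hgf⟩ := exists_stronglyMeasurable_continuousMap_ae_eq (μ := volume)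
    (f := fun t (x : K) => f t x) (fun x => (hx x).1.1) (H2.mono fun t ht => by fun_prop)
  have hpq : 0 ≤ p / q := div_nonneg (by linarith) (by linarith)
  obtain ⟨C, hC⟩ : BddAbove (range fun x : K => a * ‖(x : X)‖ ^ (p / q)) :=
    (isCompact_range (by fun_prop)).bddAbove
  have hnorm : ∀ᵐ t, ‖g t‖ ≤ max C 0 + ‖b t‖ := by
    filter_upwards [hgf, hgrowth] with t hgt hft
    refine (ContinuousMap.norm_le _ (by positivity)).2 fun x => ?_
    rw [hgt]
    calc ‖f t x‖ ≤ a * ‖(x : X)‖ ^ (p / q) + b t := hft x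
      _ ≤ max C 0 + ‖b t‖ :=
          add_le_add ((hC ⟨x, rfl⟩).trans (le_max_left _ _)) (Real.le_norm_self _)
  exact ⟨g, hgf.mono fun t ht => congrFun ht, hg.aestronglyMeasurable,
    locallyIntegrable_rpow_norm_of_norm_le_const_add hq hg.aestronglyMeasurable hb.1.2 hnorm⟩

/-- Under the growth condition (H1), the Carathéodory condition (H2), and
`f(·,x) ∈ BS^q(ℝ,Y) ⊂ L^q_loc(ℝ,Y)` for each `x`, for every compact `K ⊂ X` the map
`t ↦ f(t,·)|_K` belongs to `L^q_loc(ℝ, C(K,Y))`: it agrees a.e. with a strongly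
measurable, locally `q`-integrable function with values in `C(K,Y)`. -/
theorem stmt_16 {Y : Type*} [NormedAddCommGroup Y] (p q : ℝ) (hp : 1 ≤ p) (hq : 1 ≤ q)
    (f : ℝ → X → Y)
    (H1 : ∃ a > (0:ℝ), ∃ b : ℝ → ℝ, StepanovAA q b ∧
      ∀ᵐ t : ℝ, ∀ x : X, ‖f t x‖ ≤ a * ‖x‖ ^ (p / q) + b t)
    (H2 : ∀ᵐ t : ℝ, Continuous (f t))
    (hx : ∀ x : X, MemBSp q (fun t => f t x))
    (K : Set X) [CompactSpace K] (hK : IsCompact K) :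
    ∃ g : ℝ → ContinuousMap K Y,
      (∀ᵐ t : ℝ, ∀ x : K, g t x = f t (x : X)) ∧
      AEStronglyMeasurable g volume ∧
      LocallyIntegrable (fun t => ‖g t‖ ^ q) volume :=
  stmt_16_general p q hp hq f H1 H2 hx K
end
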